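/- Let A, B ⊆ ℍ be nonempty, closed, geodesically convex subsets of the hyperbolic plane with A ∩ B ≠ ∅. Let P_A, P_B : ℍ → ℍ satisfy: P_A z ∈ A, dist z (P_A z) ≤ dist z a for all a ∈ A, and similarly for P_B and B. Let R_A, R_B : ℍ → ℍ satisfy: P_A z is the midpoint of z and R_A z for every z (dist z (P_A z) = dist (P_A z) (R_A z) = (1/2)·dist z (R_A z)), and similarly for R_B. Let μ : ℍ → ℍ → ℍ be the midpoint map: dist x (μ x y) = dist (μ x y) y = (1/2)·dist x y. Given x_0 ∈ ℍ, define x_{m+1} = μ x_m (R_A (R_B x_m)). Then (x_m) converges to some x ∈ ℍ with R_A (R_B x) = x and P_B x ∈ A ∩ B; moreover the shadow sequence (P_B x_m) converges to P_B x ∈ A ∩ B. -/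

import Mathlib

/-!
In the hyperboloid model, `cosh (dist z w)` is the Minkowski pairing of the images of `z` and `w`,
the midpoint of `u` and `v` is the normalized sum of their images, and geodesics are normalized
linear combinations. A first-variation argument along the geodesic from `P z` to `c` yields the
hyperbolic Pythagorean inequality `cosh d(z, P z) * cosh d(P z, c) ≤ cosh d(z, c)` for a
nearest-point map `P` onto a geodesically convex set; it makes reflections nonexpansive and
nearest-point maps continuous. For the averaged iteration of the nonexpansive map `R_A ∘ R_B`, the
median identity makes `dist p x_m` nonincreasing for every fixed point `p`; hence consecutive
iterates approach each other, a cluster point (ℍ is proper) is a fixed point, and monotonicity of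
the distance to that cluster point gives convergence. At a fixed point `x`, both `P_B x` and
`P_A (R_B x)` are the midpoint of `x` and `R_B x`, so they coincide and lie in `A ∩ B`.
-/

open Filter Topology Real Function Set
open scoped UpperHalfPlane

theorem Real.nonneg_of_forall_le_mul_cosh_add_mul_sinh {A B L : ℝ} (hL : 0 < L)
    (h : ∀ t ∈ Ioc 0 L, A ≤ A * cosh t + B * sinh t) : 0 ≤ B := by
  have hhalf : ∀ t ∈ Ioc 0 L, 0 ≤ A * sinh (t / 2) + B * cosh (t / 2) := by
    intro t ht
    have hs : 0 < 2 * sinh (t / 2) := by have := sinh_pos_iff.mpr (half_pos ht.1); positivity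
    have hineq := h t ht
    rw [← mul_div_cancel₀ t two_ne_zero, cosh_two_mul, sinh_two_mul, cosh_sq] at hineq
    exact (mul_nonneg_iff_of_pos_left hs).mp (by linarith)
  have hcont : Continuous fun t => A * sinh (t / 2) + B * cosh (t / 2) := by fun_prop
  have hlim := (hcont.tendsto 0).mono_left (nhdsWithin_le_nhds (s := Ioi 0))
  simp only [zero_div, sinh_zero, cosh_zero, mul_zero, mul_one, zero_add] at hlim
  exact ge_of_tendsto hlim (eventually_of_mem (Ioc_mem_nhdsGT hL) hhalf)

theorem Real.tendsto_zero_of_tendsto_cosh_one {α : Type*} {l : Filter α} {f : α → ℝ}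
    (hf : ∀ a, 0 ≤ f a) (h : Tendsto (fun a => cosh (f a)) l (𝓝 1)) : Tendsto f l (𝓝 0) := by
  have h' : Tendsto (fun a => cosh (f a)) l (𝓝[Ici 1] 1) :=
    tendsto_nhdsWithin_iff.mpr ⟨h, Eventually.of_forall fun a => one_le_cosh (f a)⟩
  simpa only [comp_def, arcosh_cosh (hf _), arcosh_zero] using
    (continuousOn_arcosh 1 self_mem_Ici).tendsto.comp h'

section MetricMidpoint

variable {X : Type*} [PseudoMetricSpace X]

theorem cosh_dist_le_cosh_dist_iff {a b c d : X} :
    cosh (dist a b) ≤ cosh (dist c d) ↔ dist a b ≤ dist c d :=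
  cosh_strictMonoOn.le_iff_le dist_nonneg dist_nonneg

def IsMetricMidpoint (u v m : X) : Prop :=
  dist u m = dist m v ∧ dist m v = 1 / 2 * dist u v

def IsGeodesicallyConvex (C : Set X) : Prop :=
  ∀ u ∈ C, ∀ v ∈ C, ∀ z, dist u z + dist z v = dist u v → z ∈ C

namespace IsMetricMidpoint

variable {u v m : X}

theorem dist_left (h : IsMetricMidpoint u v m) : dist u m = dist u v / 2 := by
  rw [h.1, h.2]; ring

theorem symm (h : IsMetricMidpoint u v m) : IsMetricMidpoint v u m := by
  obtain ⟨h₁, h₂⟩ := h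
  exact ⟨by rw [dist_comm v m, dist_comm m u, h₁],
    by rw [dist_comm m u, dist_comm v u, h₁, h₂]⟩

end IsMetricMidpoint

end MetricMidpoint

namespace UpperHalfPlane

def minkowski : LinearMap.BilinForm ℝ (Fin 3 → ℝ) :=
  LinearMap.mk₂ ℝ (fun v w => v 0 * w 0 - v 1 * w 1 - v 2 * w 2)
    (fun _ _ _ => by simp only [Pi.add_apply]; ring)
    (fun _ _ _ => by simp only [Pi.smul_apply, smul_eq_mul]; ring)
    (fun _ _ _ => by simp only [Pi.add_apply]; ring)
    (fun _ _ _ => by simp only [Pi.smul_apply, smul_eq_mul]; ring)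

theorem minkowski_apply (v w : Fin 3 → ℝ) :
    minkowski v w = v 0 * w 0 - v 1 * w 1 - v 2 * w 2 := rfl

theorem minkowski_comm (v w : Fin 3 → ℝ) : minkowski v w = minkowski w v := by
  simp only [minkowski_apply]; ring

theorem eq_zero_of_minkowski_eq_zero {m v : Fin 3 → ℝ} (hm : minkowski m m = 1)
    (hv : minkowski v v = 0) (hvm : minkowski v m = 0) : v = 0 := by
  rw [minkowski_apply] at hm hv hvm
  have key : v 0 ^ 2 + (v 1 * m 2 - v 2 * m 1) ^ 2 = 0 := by
    linear_combination (v 0 * m 0 + v 1 * m 1 + v 2 * m 2) * hvm - (m 0 ^ 2 - 1) * hv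
      - (v 1 ^ 2 + v 2 ^ 2) * hm
  have h₀ : v 0 = 0 := by nlinarith [sq_nonneg (v 1 * m 2 - v 2 * m 1), sq_nonneg (v 0)]
  have h₁ : v 1 = 0 := by nlinarith [sq_nonneg (v 1), sq_nonneg (v 2)]
  have h₂ : v 2 = 0 := by nlinarith [sq_nonneg (v 1), sq_nonneg (v 2)]
  ext i; fin_cases i <;> assumption

/-- The standard isometry of `ℍ` onto the upper sheet of the hyperboloid `minkowski v v = 1`. -/
noncomputable def toHyperboloid (z : ℍ) : Fin 3 → ℝ :=
  ![(z.re ^ 2 + z.im ^ 2 + 1) / (2 * z.im), z.re / z.im, (z.re ^ 2 + z.im ^ 2 - 1) / (2 * z.im)]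

theorem cosh_dist_eq_minkowski (z w : ℍ) :
    cosh (dist z w) = minkowski (toHyperboloid z) (toHyperboloid w) := by
  have := z.im_pos.ne'
  have := w.im_pos.ne'
  rw [cosh_dist', minkowski_apply]
  simp only [toHyperboloid, Matrix.cons_val_zero, Matrix.cons_val_one, Matrix.cons_val_two,
    Matrix.head_cons, Matrix.tail_cons]
  field_simp
  ring

theorem minkowski_toHyperboloid_self (z : ℍ) :
    minkowski (toHyperboloid z) (toHyperboloid z) = 1 := by
  rw [← cosh_dist_eq_minkowski, dist_self, cosh_zero]

theorem toHyperboloid_injective : Injective toHyperboloid := by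
  intro z w h
  apply dist_eq_zero.mp
  apply cosh_injOn dist_nonneg self_mem_Ici
  rw [cosh_dist_eq_minkowski, h, minkowski_toHyperboloid_self, cosh_zero]

theorem exists_toHyperboloid_eq {v : Fin 3 → ℝ} (hv : minkowski v v = 1) (z : ℍ)
    (hz : 0 < minkowski v (toHyperboloid z)) : ∃ w : ℍ, toHyperboloid w = v := by
  set m := toHyperboloid z
  have hm := minkowski_toHyperboloid_self z
  have hm₀ : 0 < m 0 := by
    have := z.im_pos
    simp only [m, toHyperboloid, Matrix.cons_val_zero]
    positivity
  rw [minkowski_apply] at hv hz hm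
  have hv₀ : 0 < v 0 := by
    by_contra! h
    nlinarith [sq_nonneg (v 1 * m 2 - v 2 * m 1), sq_nonneg (v 1 * m 1 + v 2 * m 2),
      mul_nonneg (neg_nonneg.mpr h) hm₀.le]
  have hpos : 0 < v 0 - v 2 := by nlinarith [sq_nonneg (v 1)]
  refine ⟨⟨⟨v 1 / (v 0 - v 2), 1 / (v 0 - v 2)⟩, by simpa using hpos⟩, ?_⟩
  ext i
  fin_cases i
  all_goals
    simp only [toHyperboloid, re, im, one_div, inv_pow, div_inv_eq_mul, Fin.zero_eta, Fin.mk_one,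
      Fin.reduceFinMk, Matrix.cons_val_zero, Matrix.cons_val_one, Matrix.cons_val]
    field_simp
  all_goals linear_combination (-1) * hv

theorem _root_.IsMetricMidpoint.toHyperboloid_add {u v m : ℍ} (h : IsMetricMidpoint u v m) :
    toHyperboloid u + toHyperboloid v = (2 * cosh (dist u m)) • toHyperboloid m := by
  set c := cosh (dist u m)
  have hc : minkowski (toHyperboloid u) (toHyperboloid m) = c := (cosh_dist_eq_minkowski u m).symm
  have huv : cosh (dist u v) = 2 * c ^ 2 - 1 := by
    rw [show dist u v = 2 * dist u m by rw [h.dist_left]; ring, cosh_two_mul, cosh_sq]; ring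
  have hvm : cosh (dist v m) = c := by rw [h.symm.dist_left, dist_comm, ← h.dist_left]
  rw [cosh_dist_eq_minkowski] at huv hvm
  have hm := minkowski_toHyperboloid_self m
  have hu := minkowski_toHyperboloid_self u
  have hv := minkowski_toHyperboloid_self v
  rw [← sub_eq_zero]
  apply eq_zero_of_minkowski_eq_zero hm
  · simp only [map_add, map_sub, map_smul, LinearMap.add_apply, LinearMap.sub_apply,
      LinearMap.smul_apply, smul_eq_mul]
    rw [minkowski_comm (toHyperboloid v) (toHyperboloid u),
      minkowski_comm (toHyperboloid m) (toHyperboloid u),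
      minkowski_comm (toHyperboloid m) (toHyperboloid v)]
    linear_combination hu + hv + 2 * huv - 4 * c * hc - 4 * c * hvm + 4 * c ^ 2 * hm
  · simp only [map_add, map_sub, map_smul, LinearMap.add_apply, LinearMap.sub_apply,
      LinearMap.smul_apply, smul_eq_mul]
    linear_combination hc + hvm - 2 * c * hm

theorem _root_.IsMetricMidpoint.cosh_dist_add_cosh_dist {u v m : ℍ} (h : IsMetricMidpoint u v m)
    (q : ℍ) : cosh (dist q u) + cosh (dist q v) = 2 * cosh (dist u m) * cosh (dist q m) := by
  rw [cosh_dist_eq_minkowski q u, cosh_dist_eq_minkowski q v, ← map_add, h.toHyperboloid_add,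
    map_smul, smul_eq_mul, cosh_dist_eq_minkowski q m]

theorem _root_.IsMetricMidpoint.unique {u v m m' : ℍ} (h : IsMetricMidpoint u v m)
    (h' : IsMetricMidpoint u v m') : m = m' := by
  have hc : cosh (dist u m) = cosh (dist u m') := by rw [h.dist_left, h'.dist_left]
  have hsmul := h.toHyperboloid_add.symm.trans h'.toHyperboloid_add
  rw [hc] at hsmul
  exact toHyperboloid_injective (smul_right_injective _ (by positivity) hsmul)

theorem exists_dist_eq_of_le_dist {P Q : ℍ} (hPQ : P ≠ Q) {t : ℝ} (ht₀ : 0 ≤ t)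
    (ht : t ≤ dist P Q) :
    ∃ γ : ℍ, dist P γ = t ∧ dist γ Q = dist P Q - t ∧ ∀ z : ℍ,
      sinh (dist P Q) * cosh (dist z γ) =
        sinh (dist P Q - t) * cosh (dist z P) + sinh t * cosh (dist z Q) := by
  set L := dist P Q
  have hsL : sinh L ≠ 0 := (sinh_pos_iff.mpr (dist_pos.mpr hPQ)).ne'
  set v := (sinh L)⁻¹ • (sinh (L - t) • toHyperboloid P + sinh t • toHyperboloid Q)
  have hv : ∀ z : ℍ, sinh L * minkowski (toHyperboloid z) v =
      sinh (L - t) * cosh (dist z P) + sinh t * cosh (dist z Q) := by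
    intro z
    simp only [v, map_smul, map_add, smul_eq_mul, cosh_dist_eq_minkowski]
    field_simp
  have hvP : minkowski v (toHyperboloid P) = cosh t := by
    have := hv P
    rw [dist_self, cosh_zero, minkowski_comm] at this
    apply mul_left_cancel₀ hsL
    rw [this, sinh_sub]
    ring
  have hvQ : minkowski v (toHyperboloid Q) = cosh (L - t) := by
    have := hv Q
    rw [dist_self, cosh_zero, minkowski_comm, dist_comm] at this
    apply mul_left_cancel₀ hsL
    rw [this, sinh_sub, cosh_sub]
    linear_combination (-sinh t) * cosh_sq L
  have hvv : minkowski v v = 1 := by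
    show minkowski ((sinh L)⁻¹ • (sinh (L - t) • toHyperboloid P + sinh t • toHyperboloid Q)) v = 1
    simp only [map_smul, map_add, LinearMap.smul_apply, LinearMap.add_apply, smul_eq_mul]
    rw [minkowski_comm _ v, minkowski_comm _ v, hvP, hvQ, mul_comm (sinh t), ← sinh_add,
      sub_add_cancel, inv_mul_cancel₀ hsL]
  obtain ⟨γ, hγ⟩ := exists_toHyperboloid_eq hvv P (hvP ▸ cosh_pos t)
  refine ⟨γ, cosh_injOn dist_nonneg ht₀ ?_, cosh_injOn dist_nonneg (sub_nonneg.mpr ht) ?_,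
    fun z => by rw [cosh_dist_eq_minkowski, hγ, hv]⟩
  · rw [cosh_dist_eq_minkowski, hγ, minkowski_comm, hvP]
  · rw [cosh_dist_eq_minkowski, hγ, hvQ]

theorem cosh_dist_mul_cosh_dist_le {C : Set ℍ} (hC : IsGeodesicallyConvex C) {z P Q : ℍ}
    (hP : P ∈ C) (hQ : Q ∈ C) (hmin : ∀ c ∈ C, dist z P ≤ dist z c) :
    cosh (dist z P) * cosh (dist P Q) ≤ cosh (dist z Q) := by
  rcases eq_or_ne P Q with rfl | hPQ
  · rw [dist_self, cosh_zero, mul_one]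
  set L := dist P Q
  have hsL : 0 < sinh L := sinh_pos_iff.mpr (dist_pos.mpr hPQ)
  set A := cosh (dist z P)
  set B := (cosh (dist z Q) - A * cosh L) / sinh L with hB
  suffices 0 ≤ B by linarith [(le_div_iff₀ hsL).mp this]
  -- At distance `t` from `P` on the geodesic to `Q`, `cosh (dist z ·)` equals
  -- `A * cosh t + B * sinh t`, and it is minimal at `t = 0`.
  refine Real.nonneg_of_forall_le_mul_cosh_add_mul_sinh (A := A) (dist_pos.mpr hPQ) fun t ht => ?_
  obtain ⟨γ, hPγ, hγQ, hγ⟩ := exists_dist_eq_of_le_dist hPQ ht.1.le ht.2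
  have hγC : γ ∈ C := hC P hP Q hQ γ (by rw [hPγ, hγQ]; ring)
  have hAγ : A ≤ cosh (dist z γ) :=
    cosh_dist_le_cosh_dist_iff.mpr (hmin γ hγC)
  have hzγ : cosh (dist z γ) = A * cosh t + B * sinh t := by
    apply mul_left_cancel₀ hsL.ne'
    rw [hγ z, hB, sinh_sub]
    field_simp
    ring
  exact hzγ ▸ hAγ

section NearestPoint

variable {C : Set ℍ} {P R : ℍ → ℍ}

theorem reflection_eq_self_of_mem (hproj : ∀ z, ∀ c ∈ C, dist z (P z) ≤ dist z c)
    (hR : ∀ z, IsMetricMidpoint z (R z) (P z)) {p : ℍ} (hp : p ∈ C) : R p = p := by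
  have hPp : P p = p := (dist_le_zero.mp (by simpa using hproj p p hp)).symm
  have h := (hR p).1
  rw [hPp, dist_self] at h
  exact (dist_eq_zero.mp h.symm).symm

theorem lipschitzWith_one_reflection (hC : IsGeodesicallyConvex C) (hmem : ∀ z, P z ∈ C)
    (hproj : ∀ z, ∀ c ∈ C, dist z (P z) ≤ dist z c) (hR : ∀ z, IsMetricMidpoint z (R z) (P z)) :
    LipschitzWith 1 R := by
  refine LipschitzWith.mk_one fun z w => ?_
  set s := cosh (dist z (P z))
  set t := cosh (dist w (P w))
  have hRz : toHyperboloid (R z) = (2 * s) • toHyperboloid (P z) - toHyperboloid z :=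
    eq_sub_of_add_eq' (hR z).toHyperboloid_add
  have hRw : toHyperboloid (R w) = (2 * t) • toHyperboloid (P w) - toHyperboloid w :=
    eq_sub_of_add_eq' (hR w).toHyperboloid_add
  have hRzRw : cosh (dist (R z) (R w)) = 4 * s * t * cosh (dist (P z) (P w))
      - 2 * s * cosh (dist (P z) w) - 2 * t * cosh (dist z (P w)) + cosh (dist z w) := by
    simp only [cosh_dist_eq_minkowski, hRz, hRw, map_sub, map_smul, LinearMap.sub_apply,
      LinearMap.smul_apply, smul_eq_mul]
    ring
  have hz : s * cosh (dist (P z) (P w)) ≤ cosh (dist z (P w)) :=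
    cosh_dist_mul_cosh_dist_le hC (hmem z) (hmem w) (hproj z)
  have hw : t * cosh (dist (P z) (P w)) ≤ cosh (dist (P z) w) := by
    simpa only [dist_comm] using cosh_dist_mul_cosh_dist_le hC (hmem w) (hmem z) (hproj w)
  have hs : 0 ≤ s := (cosh_pos _).le
  have ht : 0 ≤ t := (cosh_pos _).le
  refine cosh_dist_le_cosh_dist_iff.mp ?_
  rw [hRzRw]
  nlinarith [mul_le_mul_of_nonneg_left hz ht, mul_le_mul_of_nonneg_left hw hs]

theorem continuous_nearestPoint (hC : IsGeodesicallyConvex C) (hmem : ∀ z, P z ∈ C)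
    (hproj : ∀ z, ∀ c ∈ C, dist z (P z) ≤ dist z c) : Continuous P := by
  refine continuous_iff_continuousAt.mpr fun z => ?_
  set D := dist z (P z)
  -- Pythagoras and `D - dist z y ≤ dist y (P y)` give `1 ≤ cosh (dist (P y) (P z)) ≤ g y`.
  set g : ℍ → ℝ := fun y => cosh (dist y (P z)) / cosh (max 0 (D - dist z y))
  have hg : Tendsto g (𝓝 z) (𝓝 1) := by
    have : Continuous g := .div (by fun_prop) (by fun_prop) fun y => (cosh_pos _).ne'
    simpa only [g, D, dist_comm z (P z), dist_self, sub_zero, dist_nonneg, sup_of_le_right,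
      div_self (cosh_pos _).ne'] using this.tendsto z
  have hle : ∀ y, cosh (dist (P y) (P z)) ≤ g y := by
    intro y
    have hpy := cosh_dist_mul_cosh_dist_le hC (hmem y) (hmem z) (hproj y)
    have hD : cosh (max 0 (D - dist z y)) ≤ cosh (dist y (P y)) := by
      refine (cosh_strictMonoOn.le_iff_le (le_max_left (0 : ℝ) _) dist_nonneg).mpr
        (max_le dist_nonneg ?_)
      linarith [hproj z (P y) (hmem y), dist_triangle z y (P y)]
    rw [le_div_iff₀ (cosh_pos _)]
    nlinarith [mul_le_mul_of_nonneg_left hD (cosh_pos (dist (P y) (P z))).le]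
  have hcosh : Tendsto (fun y => cosh (dist (P y) (P z))) (𝓝 z) (𝓝 1) :=
    tendsto_of_tendsto_of_tendsto_of_le_of_le tendsto_const_nhds hg (fun y => one_le_cosh _) hle
  exact tendsto_iff_dist_tendsto_zero.mpr
    (Real.tendsto_zero_of_tendsto_cosh_one (fun _ => dist_nonneg) hcosh)

end NearestPoint

section AveragedIteration

variable {T : ℍ → ℍ} {x : ℕ → ℍ} {q : ℍ}

theorem cosh_dist_mul_cosh_dist_le_of_isFixedPt (hT : LipschitzWith 1 T) (hq : IsFixedPt T q)
    {y y' : ℍ} (hy : IsMetricMidpoint y (T y) y') :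
    cosh (dist q y') * cosh (dist y y') ≤ cosh (dist q y) := by
  have hTy : dist q (T y) ≤ dist q y := by
    simpa only [hq.eq, NNReal.coe_one, one_mul] using hT.dist_le_mul q y
  have hcosh := cosh_dist_le_cosh_dist_iff.mpr hTy
  linarith [hy.cosh_dist_add_cosh_dist q]

variable (hT : LipschitzWith 1 T) (hx : ∀ n, IsMetricMidpoint (x n) (T (x n)) (x (n + 1)))
include hT hx

theorem antitone_dist_of_isFixedPt (hq : IsFixedPt T q) : Antitone fun n => dist q (x n) := by
  refine antitone_nat_of_succ_le fun n => ?_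
  have h := cosh_dist_mul_cosh_dist_le_of_isFixedPt hT hq (hx n)
  refine cosh_dist_le_cosh_dist_iff.mp ?_
  nlinarith [one_le_cosh (dist (x n) (x (n + 1))), cosh_pos (dist q (x (n + 1)))]

theorem tendsto_dist_succ_of_isFixedPt (hq : IsFixedPt T q) :
    Tendsto (fun n => dist (x n) (x (n + 1))) atTop (𝓝 0) := by
  set a := fun n => cosh (dist q (x n))
  have ha : Antitone a := fun m n hmn =>
    cosh_dist_le_cosh_dist_iff.mpr
      (antitone_dist_of_isFixedPt hT hx hq hmn)
  have hlim := tendsto_atTop_ciInf ha ⟨1, by rintro _ ⟨n, rfl⟩; exact one_le_cosh _⟩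
  have hpos : 0 < ⨅ n, a n := lt_of_lt_of_le one_pos (le_ciInf fun n => one_le_cosh _)
  have hratio : Tendsto (fun n => a n / a (n + 1)) atTop (𝓝 1) := by
    simpa only [div_self hpos.ne', Pi.div_def, comp_def] using
      hlim.div (hlim.comp (tendsto_add_atTop_nat 1)) hpos.ne'
  refine Real.tendsto_zero_of_tendsto_cosh_one (fun _ => dist_nonneg)
    (tendsto_of_tendsto_of_tendsto_of_le_of_le tendsto_const_nhds hratio
      (fun n => one_le_cosh _) fun n => ?_)
  rw [le_div_iff₀ (cosh_pos _), mul_comm]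
  exact cosh_dist_mul_cosh_dist_le_of_isFixedPt hT hq (hx n)

theorem exists_isFixedPt_tendsto_of_isMetricMidpoint (hfix : ∃ p, IsFixedPt T p) :
    ∃ y, IsFixedPt T y ∧ Tendsto x atTop (𝓝 y) := by
  obtain ⟨p, hp⟩ := hfix
  have hbdd : ∀ n, x n ∈ Metric.closedBall p (dist p (x 0)) := fun n => by
    rw [Metric.mem_closedBall, dist_comm]
    exact antitone_dist_of_isFixedPt hT hx hp (Nat.zero_le n)
  obtain ⟨y, -, φ, hφ, hxφ⟩ := (isCompact_closedBall p (dist p (x 0))).tendsto_subseq hbdd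
  have hy : IsFixedPt T y := by
    have hstep : Tendsto (fun k => dist (x (φ k)) (T (x (φ k)))) atTop (𝓝 0) := by
      have := ((tendsto_dist_succ_of_isFixedPt hT hx hp).comp hφ.tendsto_atTop).const_mul 2
      simp only [mul_zero] at this
      refine this.congr fun k => ?_
      rw [comp_apply, (hx (φ k)).dist_left, mul_div_cancel₀ _ two_ne_zero]
    have hlim := hxφ.dist ((hT.continuous.tendsto y).comp hxφ)
    exact (dist_eq_zero.mp (tendsto_nhds_unique hlim hstep)).symm
  refine ⟨y, hy, tendsto_iff_dist_tendsto_zero.mpr ?_⟩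
  simp only [dist_comm (x _) y]
  refine (tendsto_iff_tendsto_subseq_of_antitone (antitone_dist_of_isFixedPt hT hx hy)
    hφ.tendsto_atTop).mpr ?_
  simpa only [comp_def, dist_comm y] using tendsto_iff_dist_tendsto_zero.mp hxφ

end AveragedIteration

end UpperHalfPlane

open UpperHalfPlane

theorem AAR_convergence_hyperbolic_general
    (A B : Set UpperHalfPlane)
    (hA_conv : ∀ u ∈ A, ∀ v ∈ A, ∀ z : UpperHalfPlane,
      dist u z + dist z v = dist u v → z ∈ A)
    (hB_conv : ∀ u ∈ B, ∀ v ∈ B, ∀ z : UpperHalfPlane,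
      dist u z + dist z v = dist u v → z ∈ B)
    (hAB : (A ∩ B).Nonempty)
    (PA PB RA RB : UpperHalfPlane → UpperHalfPlane)
    (hPA_mem : ∀ z, PA z ∈ A) (hPA_proj : ∀ z, ∀ a ∈ A, dist z (PA z) ≤ dist z a)
    (hPB_mem : ∀ z, PB z ∈ B) (hPB_proj : ∀ z, ∀ b ∈ B, dist z (PB z) ≤ dist z b)
    (hRA1 : ∀ z, dist z (PA z) = dist (PA z) (RA z))
    (hRA2 : ∀ z, dist (PA z) (RA z) = (1 / 2) * dist z (RA z))
    (hRB1 : ∀ z, dist z (PB z) = dist (PB z) (RB z))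
    (hRB2 : ∀ z, dist (PB z) (RB z) = (1 / 2) * dist z (RB z))
    (μ : UpperHalfPlane → UpperHalfPlane → UpperHalfPlane)
    (hμ1 : ∀ u v, dist u (μ u v) = dist (μ u v) v)
    (hμ2 : ∀ u v, dist (μ u v) v = (1 / 2) * dist u v)
    (xs : ℕ → UpperHalfPlane)
    (hxs : ∀ m, xs (m + 1) = μ (xs m) (RA (RB (xs m)))) :
    ∃ x : UpperHalfPlane,
      Tendsto xs atTop (𝓝 x) ∧ RA (RB x) = x ∧ PB x ∈ A ∩ B ∧
        Tendsto (fun m => PB (xs m)) atTop (𝓝 (PB x)) := by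
  have hRA : ∀ z, IsMetricMidpoint z (RA z) (PA z) := fun z => ⟨hRA1 z, hRA2 z⟩
  have hRB : ∀ z, IsMetricMidpoint z (RB z) (PB z) := fun z => ⟨hRB1 z, hRB2 z⟩
  have hT : LipschitzWith 1 (RA ∘ RB) := by
    simpa only [mul_one] using (lipschitzWith_one_reflection hA_conv hPA_mem hPA_proj hRA).comp
      (lipschitzWith_one_reflection hB_conv hPB_mem hPB_proj hRB)
  obtain ⟨p, hpA, hpB⟩ := hAB
  have hTp : IsFixedPt (RA ∘ RB) p := by
    rw [IsFixedPt, comp_apply, reflection_eq_self_of_mem hPB_proj hRB hpB,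
      reflection_eq_self_of_mem hPA_proj hRA hpA]
  have hxs_mid : ∀ m, IsMetricMidpoint (xs m) ((RA ∘ RB) (xs m)) (xs (m + 1)) := fun m => by
    rw [hxs m]
    exact ⟨hμ1 _ _, hμ2 _ _⟩
  obtain ⟨x, hx, hlim⟩ := exists_isFixedPt_tendsto_of_isMetricMidpoint hT hxs_mid ⟨p, hTp⟩
  have hx' : RA (RB x) = x := hx
  have hPBx : PB x = PA (RB x) := (hRB x).unique (by simpa only [hx'] using (hRA (RB x)).symm)
  exact ⟨x, hlim, hx', ⟨hPBx ▸ hPA_mem _, hPB_mem x⟩,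
    ((continuous_nearestPoint hB_conv hPB_mem hPB_proj).tendsto x).comp hlim⟩

/-- Convergence of the averaged alternating reflection (AAR) method in the hyperbolic plane
(modeled by the upper half-plane with its hyperbolic metric): for nonempty closed
geodesically convex sets `A`, `B` with `A ∩ B ≠ ∅`, the AAR iterates
`x_{m+1} = midpoint of x_m and R_A R_B x_m` converge to a fixed point `x` of `R_A R_B`,
`P_B x ∈ A ∩ B`, and the shadow sequence `(P_B x_m)` converges to `P_B x`. -/
theorem AAR_convergence_hyperbolic
    (A B : Set UpperHalfPlane)
    (hA_ne : A.Nonempty) (hA_cl : IsClosed A)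
    (hA_conv : ∀ u ∈ A, ∀ v ∈ A, ∀ z : UpperHalfPlane,
      dist u z + dist z v = dist u v → z ∈ A)
    (hB_ne : B.Nonempty) (hB_cl : IsClosed B)
    (hB_conv : ∀ u ∈ B, ∀ v ∈ B, ∀ z : UpperHalfPlane,
      dist u z + dist z v = dist u v → z ∈ B)
    (hAB : (A ∩ B).Nonempty)
    (PA PB RA RB : UpperHalfPlane → UpperHalfPlane)
    (hPA_mem : ∀ z, PA z ∈ A) (hPA_proj : ∀ z, ∀ a ∈ A, dist z (PA z) ≤ dist z a)
    (hPB_mem : ∀ z, PB z ∈ B) (hPB_proj : ∀ z, ∀ b ∈ B, dist z (PB z) ≤ dist z b)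
    (hRA1 : ∀ z, dist z (PA z) = dist (PA z) (RA z))
    (hRA2 : ∀ z, dist (PA z) (RA z) = (1 / 2) * dist z (RA z))
    (hRB1 : ∀ z, dist z (PB z) = dist (PB z) (RB z))
    (hRB2 : ∀ z, dist (PB z) (RB z) = (1 / 2) * dist z (RB z))
    (μ : UpperHalfPlane → UpperHalfPlane → UpperHalfPlane)
    (hμ1 : ∀ u v, dist u (μ u v) = dist (μ u v) v)
    (hμ2 : ∀ u v, dist (μ u v) v = (1 / 2) * dist u v)
    (x0 : UpperHalfPlane) (xs : ℕ → UpperHalfPlane)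
    (hxs0 : xs 0 = x0) (hxs : ∀ m, xs (m + 1) = μ (xs m) (RA (RB (xs m)))) :
    ∃ x : UpperHalfPlane,
      Tendsto xs atTop (𝓝 x) ∧ RA (RB x) = x ∧ PB x ∈ A ∩ B ∧
        Tendsto (fun m => PB (xs m)) atTop (𝓝 (PB x)) :=
  AAR_convergence_hyperbolic_general A B hA_conv hB_conv hAB PA PB RA RB hPA_mem hPA_proj hPB_mem
    hPB_proj hRA1 hRA2 hRB1 hRB2 μ hμ1 hμ2 xs hxs
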